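/- Consider a customer attraction game and define ψ(t) = ln(max(e^{-1}, t)) and Ψ(S) = ∑_{j∈N} v_j · ψ(c(j,S)). Let W = ∑_{i∈A} w_i. Then for any strategy profile S^{Ψ*} maximizing Ψ over the joint strategy space and any strategy profile S, it holds that SW(S) ≤ (ln(W+1) + 1) · SW(S^{Ψ*}). -/
import Mathlib


open Finset

/-- A customer attraction game: nodes `N` with integer values `≥ 1`, agents `A`
with integer weights `≥ 1`, and a nonempty finite strategy space (a finite set of
subsets of `N`) for each agent. -/
structure CAG (N A : Type*) [Fintype N] [Fintype A] where
  v : N → ℕ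
  v_pos : ∀ j, 1 ≤ v j
  w : A → ℕ
  w_pos : ∀ i, 1 ≤ w i
  strat : A → Finset (Finset N)
  strat_ne : ∀ i, (strat i).Nonempty

variable {N A : Type*} [Fintype N] [Fintype A] [DecidableEq N]

/-- The load `c(j,S)` of node `j`: total weight of agents attracting `j`. -/
def CAG.load (G : CAG N A) (S : A → Finset N) (j : N) : ℕ :=
  ∑ i : A, if j ∈ S i then G.w i else 0

/-- The utility `U_i(S) = ∑_{j ∈ S_i} v_j · w_i / c(j,S)`. -/
noncomputable def CAG.util (G : CAG N A) (S : A → Finset N) (i : A) : ℝ :=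
  ∑ j ∈ S i, (G.v j : ℝ) * (G.w i : ℝ) / (G.load S j : ℝ)

/-- A strategy profile: each agent plays a strategy from her strategy space. -/
def CAG.valid (G : CAG N A) (S : A → Finset N) : Prop :=
  ∀ i, S i ∈ G.strat i

/-- Pure Nash equilibrium. -/
def CAG.PNE [DecidableEq A] (G : CAG N A) (S : A → Finset N) : Prop :=
  G.valid S ∧ ∀ i, ∀ S' ∈ G.strat i, G.util (Function.update S i S') i ≤ G.util S i

/-- Social welfare. -/
noncomputable def CAG.sw (G : CAG N A) (S : A → Finset N) : ℝ :=
  ∑ i : A, G.util S i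

/-- The harmonic number `H_c = ∑_{k=1}^{c} 1/k`. -/
noncomputable def harm (c : ℕ) : ℝ := ∑ k ∈ Finset.range c, (1 : ℝ) / (k + 1)

/-- Rosenthal-type potential `Φ(S) = ∑_j v_j ∑_{k=1}^{c(j,S)} 1/k`. -/
noncomputable def CAG.pot (G : CAG N A) (S : A → Finset N) : ℝ :=
  ∑ j : N, (G.v j : ℝ) * harm (G.load S j)

/-- `ψ(t) = ln(max(e⁻¹, t))`. -/
noncomputable def psi (t : ℝ) : ℝ := Real.log (max (Real.exp (-1)) t)

/-- The potential `Ψ(S) = ∑_j v_j ψ(c(j,S))`. -/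
noncomputable def CAG.Psi (G : CAG N A) (S : A → Finset N) : ℝ :=
  ∑ j : N, (G.v j : ℝ) * psi (G.load S j : ℝ)

lemma sw_eq_aux (G : CAG N A) (S : A → Finset N) :
    G.sw S = ∑ j : N, if G.load S j = 0 then 0 else (G.v j : ℝ) := by
  unfold CAG.sw CAG.util
  have h : ∀ i : A, ∑ j ∈ S i, (G.v j : ℝ) * (G.w i : ℝ) / (G.load S j : ℝ)
      = ∑ j : N, if j ∈ S i then (G.v j : ℝ) * (G.w i : ℝ) / (G.load S j : ℝ) else 0 := by
    intro i
    rw [Finset.sum_ite_mem, Finset.univ_inter]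
  simp_rw [h]
  rw [Finset.sum_comm]
  refine Finset.sum_congr rfl fun j _ => ?_
  by_cases hc : G.load S j = 0
  · simp [hc]
  · rw [if_neg hc]
    have h2 : ∀ i : A, (if j ∈ S i then (G.v j : ℝ) * (G.w i : ℝ) / (G.load S j : ℝ) else 0)
        = (G.v j : ℝ) / (G.load S j : ℝ) * (if j ∈ S i then (G.w i : ℝ) else 0) := by
      intro i; split <;> ring
    simp_rw [h2, ← Finset.mul_sum]
    have hcast : (G.load S j : ℝ) = ∑ i : A, (if j ∈ S i then (G.w i : ℝ) else 0) := by
      unfold CAG.load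
      push_cast [apply_ite (Nat.cast : ℕ → ℝ)]
      rfl
    rw [← hcast]
    have : (G.load S j : ℝ) ≠ 0 := Nat.cast_ne_zero.mpr hc
    field_simp

lemma psi_zero : psi 0 = -1 := by
  unfold psi
  rw [max_eq_left (Real.exp_pos _).le, Real.log_exp]

lemma psi_of_one_le {t : ℝ} (ht : 1 ≤ t) : psi t = Real.log t := by
  unfold psi
  have h1 : Real.exp (-1) < 1 := by
    have := Real.exp_lt_exp.mpr (by norm_num : (-1:ℝ) < 0)
    rwa [Real.exp_zero] at this
  rw [max_eq_right (h1.le.trans ht)]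

lemma load_le (G : CAG N A) (S : A → Finset N) (j : N) :
    G.load S j ≤ ∑ i : A, G.w i := by
  unfold CAG.load
  exact Finset.sum_le_sum fun i _ => by split <;> simp

/-- Any maximizer of `Ψ` over the joint strategy space achieves an
`(ln(W+1)+1)`-approximately optimal social welfare, where `W = ∑_i w_i`. -/
theorem Psi_maximizer_social_welfare [DecidableEq A]
    (G : CAG N A)
    (SPsi : A → Finset N) (hSPsi : G.valid SPsi)
    (hmax : ∀ S, G.valid S → G.Psi S ≤ G.Psi SPsi)
    (S : A → Finset N) (hS : G.valid S) :
    G.sw S ≤ (Real.log ((↑(∑ i : A, G.w i) : ℝ) + 1) + 1) * G.sw SPsi := by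
  set W : ℝ := (↑(∑ i : A, G.w i) : ℝ) with hW
  set L : ℝ := Real.log (W + 1) with hL
  set V : ℝ := ∑ j : N, (G.v j : ℝ) with hV
  have key : ∀ (T : A → Finset N) (j : N),
      G.load T j ≤ ∑ i : A, G.w i → True := fun _ _ _ => trivial
  -- lower bound: sw T - V ≤ Psi T
  have hlow : G.sw S - V ≤ G.Psi S := by
    rw [sw_eq_aux, hV, ← Finset.sum_sub_distrib]
    unfold CAG.Psi
    refine Finset.sum_le_sum fun j _ => ?_
    by_cases hc : G.load S j = 0
    · rw [if_pos hc, hc]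
      push_cast
      rw [psi_zero]
      ring_nf
      exact le_refl _
    · rw [if_neg hc]
      have h1 : (1 : ℝ) ≤ (G.load S j : ℝ) := by
        exact_mod_cast Nat.one_le_iff_ne_zero.mpr hc
      rw [psi_of_one_le h1]
      have hlog : 0 ≤ Real.log (G.load S j : ℝ) := Real.log_nonneg h1
      have hv : (0 : ℝ) ≤ (G.v j : ℝ) := Nat.cast_nonneg _
      nlinarith
  -- upper bound: Psi SPsi ≤ (L+1) * sw SPsi - V
  have hup : G.Psi SPsi ≤ (L + 1) * G.sw SPsi - V := by
    rw [sw_eq_aux, hV, Finset.mul_sum, ← Finset.sum_sub_distrib]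
    unfold CAG.Psi
    refine Finset.sum_le_sum fun j _ => ?_
    by_cases hc : G.load SPsi j = 0
    · rw [if_pos hc, hc]
      push_cast
      rw [psi_zero]
      ring_nf
      exact le_refl _
    · rw [if_neg hc]
      have h1 : (1 : ℝ) ≤ (G.load SPsi j : ℝ) := by
        exact_mod_cast Nat.one_le_iff_ne_zero.mpr hc
      rw [psi_of_one_le h1]
      have hle : (G.load SPsi j : ℝ) ≤ W + 1 := by
        rw [hW]
        have := load_le G SPsi j
        have : (G.load SPsi j : ℝ) ≤ (↑(∑ i : A, G.w i) : ℝ) := by exact_mod_cast this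
        linarith
      have hlog : Real.log (G.load SPsi j : ℝ) ≤ L :=
        Real.log_le_log (by linarith) hle
      have hv : (0 : ℝ) ≤ (G.v j : ℝ) := Nat.cast_nonneg _
      nlinarith
  have hmono := hmax S hS
  linarith
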